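/- For every n ≥ 1 and every j < 2^n, the bitwise complement of the dominated set, D̄_j = {(2^n − 1) − k : k ∈ D_j} where D_j = {k < 2^n : k ⪯ j}, is a minimal puncturing bit pattern making encoder input bit j incapable: j ∈ U_p(D̄_j), and for every proper subset Q ⊊ D̄_j one has j ∉ U_p(Q). -/

import Mathlib

/-- Binary domination: every binary digit of `i` is at most the corresponding digit of `j`. -/
def bdom (i j : ℕ) : Prop := ∀ t, i.testBit t = true → j.testBit t = true

instance (i j : ℕ) : Decidable (bdom i j) :=
  decidable_of_iff (i ||| j = j) (by
    constructor
    · intro h t hi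
      have h1 : (i ||| j).testBit t = j.testBit t := by rw [h]
      rw [Nat.testBit_or, hi, Bool.true_or] at h1
      exact h1.symm
    · intro h
      apply Nat.eq_of_testBit_eq
      intro t
      rw [Nat.testBit_or]
      cases hi : i.testBit t with
      | true => simp [h t hi]
      | false => simp)

/-- One step of zero-LLR propagation, computing the stage-`t` zero-LLR set from the
stage-`t+1` zero-LLR set `S`, for a polar code of length `2^n`. -/
def zstep (n t : ℕ) (S : Finset ℕ) : Finset ℕ :=
  (Finset.range (2 ^ n)).filter fun i =>
    if i.testBit t then i ∈ S ∧ i - 2 ^ t ∈ S else i ∈ S ∨ i + 2 ^ t ∈ S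

/-- Zero-LLR set at stage `t` for puncturing set `X`, for a polar code of length `2^n`:
`Zstage n X n = X` and `Zstage n X t = zstep n t (Zstage n X (t+1))` for `t < n`. -/
def Zstage (n : ℕ) (X : Finset ℕ) (t : ℕ) : Finset ℕ :=
  if _h : n ≤ t then X else zstep n t (Zstage n X (t + 1))
termination_by n - t
decreasing_by omega

/-- The incapable set resulting from puncturing set `X`. -/
def Up (n : ℕ) (X : Finset ℕ) : Finset ℕ := Zstage n X 0

/-!
Let `zeroPattern n t i` be the set of `m < 2^n` that agree with `i` on the bits below `t` and
have a `1` at every bit `s ∈ [t, n)` where `i` has a `0`; for `t = 0` it is `D̄_i`. Node `i` at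
stage `t` only sees punctured positions congruent to `i` mod `2^t`, and by downward induction
on `t`: if those positions all lie in `zeroPattern n t i`, then `i ∈ Z_t(X)` iff
`zeroPattern n t i ⊆ X`. At stage `t` node `i` is combined with its partner `i xor 2^t`.
If bit `t` of `i` is `1` (an AND), the patterns of `i` and its partner split
`zeroPattern n t i` by bit `t`. If it is `0` (an OR), that pattern forces bit `t` to be `1`, so
`i` itself sees no punctured position at stage `t + 1` and only the partner counts, whose
pattern is all of `zeroPattern n t i`. For `X ⊆ D̄_j` the case `t = 0` reads
`j ∈ U_p(X) ↔ X = D̄_j`.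
-/

namespace Nat

theorem add_two_pow_eq_xor {i t : ℕ} (h : i.testBit t = false) : i + 2 ^ t = i ^^^ 2 ^ t := by
  have heven : Even (i / 2 ^ t) := by
    have h0 : (i / 2 ^ t).testBit 0 = false := by rw [Nat.testBit_div_two_pow, Nat.zero_add, h]
    simpa [Nat.testBit_zero, Nat.even_iff] using h0
  have hb : i % 2 ^ t < 2 ^ t := Nat.mod_lt _ (Nat.two_pow_pos t)
  have hi : i = 2 ^ t * (i / 2 ^ t) + i % 2 ^ t := (Nat.div_add_mod i _).symm
  have hsum : i + 2 ^ t = 2 ^ t * (i / 2 ^ t ^^^ 1) + i % 2 ^ t := by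
    rw [Nat.xor_one_of_even heven]; nth_rw 1 [hi]; ring
  rw [hsum]
  apply Nat.eq_of_testBit_eq
  intro s
  conv_rhs => rw [hi]
  rw [Nat.testBit_xor, Nat.testBit_two_pow_mul_add _ hb, Nat.testBit_two_pow_mul_add _ hb,
    Nat.testBit_xor, ← Nat.pow_zero 2, Nat.testBit_two_pow, Nat.testBit_two_pow]
  rcases lt_trichotomy s t with hst | rfl | hst
  · simp [hst, hst.ne']
  · simp
  · simp [hst.not_gt, hst.ne, (Nat.sub_ne_zero_of_lt hst).symm]

theorem sub_two_pow_eq_xor {i t : ℕ} (h : i.testBit t = true) : i - 2 ^ t = i ^^^ 2 ^ t := by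
  have hflip : (i ^^^ 2 ^ t).testBit t = false := by simp [h]
  rw [Nat.sub_eq_iff_eq_add (Nat.ge_two_pow_of_testBit h), add_two_pow_eq_xor hflip,
    Nat.xor_assoc, Nat.xor_self, Nat.xor_zero]

theorem testBit_xor_two_pow_of_ne {i t s : ℕ} (h : t ≠ s) :
    (i ^^^ 2 ^ t).testBit s = i.testBit s := by
  simp [Nat.testBit_two_pow_of_ne h]

end Nat

theorem mem_zstep_of_testBit_true {n t i : ℕ} {S : Finset ℕ} (h : i.testBit t = true) :
    i ∈ zstep n t S ↔ i < 2 ^ n ∧ i ∈ S ∧ i ^^^ 2 ^ t ∈ S := by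
  simp [zstep, h, Nat.sub_two_pow_eq_xor h]

theorem mem_zstep_of_testBit_false {n t i : ℕ} {S : Finset ℕ} (h : i.testBit t = false) :
    i ∈ zstep n t S ↔ i < 2 ^ n ∧ (i ∈ S ∨ i ^^^ 2 ^ t ∈ S) := by
  simp [zstep, h, Nat.add_two_pow_eq_xor h]

theorem Zstage_of_le {n t : ℕ} (X : Finset ℕ) (h : n ≤ t) : Zstage n X t = X := by
  rw [Zstage, dif_pos h]

theorem Zstage_of_lt {n t : ℕ} (X : Finset ℕ) (h : t < n) :
    Zstage n X t = zstep n t (Zstage n X (t + 1)) := by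
  rw [Zstage, dif_neg (Nat.not_le.2 h)]

theorem exists_mem_testBit_eq_of_mem_Zstage {n t i : ℕ} {X : Finset ℕ}
    (h : i ∈ Zstage n X t) : ∃ m ∈ X, ∀ s < t, m.testBit s = i.testBit s := by
  by_cases ht : n ≤ t
  · exact ⟨i, Zstage_of_le X ht ▸ h, fun _ _ => rfl⟩
  rw [Zstage_of_lt X (Nat.lt_of_not_le ht)] at h
  obtain ⟨q, hq, hqi⟩ : ∃ q ∈ Zstage n X (t + 1), ∀ s < t, q.testBit s = i.testBit s := by
    cases hb : i.testBit t
    · rcases ((mem_zstep_of_testBit_false hb).1 h).2 with hi | hp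
      exacts [⟨i, hi, fun _ _ => rfl⟩,
        ⟨_, hp, fun s hs => Nat.testBit_xor_two_pow_of_ne hs.ne'⟩]
    · exact ⟨i, ((mem_zstep_of_testBit_true hb).1 h).2.1, fun _ _ => rfl⟩
  obtain ⟨m, hm, hmq⟩ := exists_mem_testBit_eq_of_mem_Zstage hq
  exact ⟨m, hm, fun s hs => (hmq s (by omega)).trans (hqi s hs)⟩
termination_by n - t

def zeroPattern (n t i : ℕ) : Finset ℕ :=
  (Finset.range (2 ^ n)).filter fun m =>
    (∀ s < t, m.testBit s = i.testBit s) ∧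
      ∀ s < n, t ≤ s → i.testBit s = false → m.testBit s = true

theorem mem_zeroPattern {n t i m : ℕ} :
    m ∈ zeroPattern n t i ↔ m < 2 ^ n ∧ (∀ s < t, m.testBit s = i.testBit s) ∧
      ∀ s < n, t ≤ s → i.testBit s = false → m.testBit s = true := by
  simp [zeroPattern]

theorem zeroPattern_self {n i : ℕ} (hi : i < 2 ^ n) : zeroPattern n n i = {i} := by
  ext m
  simp only [mem_zeroPattern, Finset.mem_singleton]
  constructor
  · rintro ⟨hm, hmi, -⟩
    rw [← Nat.mod_eq_of_lt hm, ← Nat.mod_eq_of_lt hi]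
    refine Nat.eq_of_testBit_eq fun s => ?_
    rw [Nat.testBit_mod_two_pow, Nat.testBit_mod_two_pow]
    by_cases hs : s < n
    · rw [hmi s hs]
    · simp [hs]
  · rintro rfl
    exact ⟨hi, fun _ _ => rfl, fun s hs hns => absurd hs (by omega)⟩

theorem mem_zeroPattern_succ_iff {n t i q m : ℕ} (hq : ∀ s ≠ t, q.testBit s = i.testBit s)
    (hqt : i.testBit t = false → q.testBit t = true) :
    m ∈ zeroPattern n (t + 1) q ↔ m ∈ zeroPattern n t i ∧ m.testBit t = q.testBit t := by
  simp only [mem_zeroPattern]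
  constructor
  · rintro ⟨hm, hmq, hmn⟩
    refine ⟨⟨hm, fun s hs => (hmq s (by omega)).trans (hq s hs.ne), fun s hsn hts his => ?_⟩,
      hmq t (by omega)⟩
    rcases hts.eq_or_lt with rfl | hts
    · rw [hmq t (by omega), hqt his]
    · exact hmn s hsn hts (by rwa [hq s hts.ne'])
  · rintro ⟨⟨hm, hmi, hmn⟩, hmt⟩
    refine ⟨hm, fun s hs => ?_, fun s hsn hts hqs => ?_⟩
    · rcases (Nat.lt_succ_iff.1 hs).eq_or_lt with rfl | hs
      · exact hmt
      · rw [hmi s hs, hq s hs.ne]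
    · exact hmn s hsn (by omega) (by rwa [← hq s (by omega)])

theorem zeroPattern_succ_xor_of_testBit_false {n t i : ℕ} (hb : i.testBit t = false)
    (ht : t < n) : zeroPattern n (t + 1) (i ^^^ 2 ^ t) = zeroPattern n t i := by
  ext m
  rw [mem_zeroPattern_succ_iff (fun s hs => Nat.testBit_xor_two_pow_of_ne hs.symm) (by simp),
    and_iff_left_iff_imp, Nat.testBit_xor, Nat.testBit_two_pow_self, hb]
  exact fun hm => (mem_zeroPattern.1 hm).2.2 t ht le_rfl hb

theorem zeroPattern_eq_union_of_testBit_true {n t i : ℕ} (hb : i.testBit t = true) :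
    zeroPattern n t i = zeroPattern n (t + 1) i ∪ zeroPattern n (t + 1) (i ^^^ 2 ^ t) := by
  ext m
  rw [Finset.mem_union, mem_zeroPattern_succ_iff (fun _ _ => rfl) (by simp [hb]),
    mem_zeroPattern_succ_iff (fun s hs => Nat.testBit_xor_two_pow_of_ne hs.symm) (by simp [hb]),
    Nat.testBit_xor, Nat.testBit_two_pow_self, hb, ← and_or_left]
  cases m.testBit t <;> simp

theorem mem_Zstage_iff_zeroPattern_subset {n t i : ℕ} {X : Finset ℕ} (ht : t ≤ n)
    (hi : i < 2 ^ n)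
    (hX : ∀ m ∈ X, (∀ s < t, m.testBit s = i.testBit s) → m ∈ zeroPattern n t i) :
    i ∈ Zstage n X t ↔ zeroPattern n t i ⊆ X := by
  rcases ht.eq_or_lt with rfl | ht
  · rw [Zstage_of_le X le_rfl, zeroPattern_self hi, Finset.singleton_subset_iff]
  have ih : ∀ q < 2 ^ n, (∀ s ≠ t, q.testBit s = i.testBit s) →
      (i.testBit t = false → q.testBit t = true) →
      (q ∈ Zstage n X (t + 1) ↔ zeroPattern n (t + 1) q ⊆ X) := fun q hq hqi hqt =>
    mem_Zstage_iff_zeroPattern_subset ht hq fun m hm hmq =>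
      (mem_zeroPattern_succ_iff hqi hqt).2
        ⟨hX m hm fun s hs => (hmq s (by omega)).trans (hqi s hs.ne), hmq t (by omega)⟩
  have hp : i ^^^ 2 ^ t < 2 ^ n := Nat.xor_lt_two_pow hi (Nat.pow_lt_pow_right one_lt_two ht)
  have hpi : ∀ s ≠ t, (i ^^^ 2 ^ t).testBit s = i.testBit s := fun s hs =>
    Nat.testBit_xor_two_pow_of_ne hs.symm
  rw [Zstage_of_lt X ht]
  cases hb : i.testBit t
  · have hi_notMem : i ∉ Zstage n X (t + 1) := fun h => by
      obtain ⟨m, hm, hmi⟩ := exists_mem_testBit_eq_of_mem_Zstage h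
      have := (mem_zeroPattern.1 (hX m hm fun s hs => hmi s (by omega))).2.2 t ht le_rfl hb
      rw [hmi t (by omega), hb] at this
      exact Bool.false_ne_true this
    rw [mem_zstep_of_testBit_false hb, ih _ hp hpi (by simp),
      zeroPattern_succ_xor_of_testBit_false hb ht]
    simp [hi, hi_notMem]
  · rw [mem_zstep_of_testBit_true hb, ih i hi (fun _ _ => rfl) (by simp [hb]),
      ih _ hp hpi (by simp [hb]), ← Finset.union_subset_iff,
      ← zeroPattern_eq_union_of_testBit_true hb]
    exact and_iff_right hi
termination_by n - t

theorem zeroPattern_zero_eq_image (n j : ℕ) :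
    zeroPattern n 0 j =
      ((Finset.range (2 ^ n)).filter fun k => bdom k j).image fun k => 2 ^ n - 1 - k := by
  have hpos := Nat.two_pow_pos n
  have hcompl : ∀ k < 2 ^ n, ∀ s,
      (2 ^ n - 1 - k).testBit s = (decide (s < n) && !k.testBit s) := fun k hk s => by
    rw [Nat.sub_sub, Nat.add_comm, Nat.testBit_two_pow_sub_succ hk]
  ext m
  simp only [mem_zeroPattern, Finset.mem_image, Finset.mem_filter, Finset.mem_range]
  constructor
  · rintro ⟨hm, -, hmj⟩
    refine ⟨2 ^ n - 1 - m, ⟨by omega, fun s hs => ?_⟩, by omega⟩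
    rw [hcompl m hm, Bool.and_eq_true, decide_eq_true_eq, Bool.not_eq_true'] at hs
    by_contra hjs
    simpa [hs.2] using hmj s hs.1 (Nat.zero_le s) (by simpa using hjs)
  · rintro ⟨k, ⟨hk, hkj⟩, rfl⟩
    refine ⟨by omega, fun s hs => absurd hs (Nat.not_lt_zero s), fun s hs _ hjs => ?_⟩
    rw [hcompl k hk, decide_eq_true hs, Bool.true_and, Bool.not_eq_true']
    by_contra hks
    simpa [hjs] using hkj s (by simpa using hks)

theorem complement_dominated_set_minimal_pattern_general (n : ℕ)
    (j : ℕ) (hj : j < 2 ^ n) :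
    j ∈ Up n (((Finset.range (2 ^ n)).filter fun k => bdom k j).image
        fun k => 2 ^ n - 1 - k) ∧
      ∀ Q ⊂ ((Finset.range (2 ^ n)).filter fun k => bdom k j).image
          (fun k => 2 ^ n - 1 - k), j ∉ Up n Q := by
  rw [← zeroPattern_zero_eq_image]
  have hUp : ∀ X ⊆ zeroPattern n 0 j, j ∈ Up n X ↔ zeroPattern n 0 j ⊆ X := fun X hX =>
    mem_Zstage_iff_zeroPattern_subset (Nat.zero_le n) hj fun m hm _ => hX hm
  exact ⟨(hUp _ subset_rfl).2 subset_rfl, fun Q hQ hjQ => hQ.2 ((hUp Q hQ.1).1 hjQ)⟩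

/-- the bitwise complement `D̄_j = {(2^n−1)−k : k ⪯ j, k < 2^n}` of the
dominated set is a minimal puncturing bit pattern making bit `j` incapable. -/
theorem complement_dominated_set_minimal_pattern (n : ℕ) (hn : 1 ≤ n)
    (j : ℕ) (hj : j < 2 ^ n) :
    j ∈ Up n (((Finset.range (2 ^ n)).filter fun k => bdom k j).image
        fun k => 2 ^ n - 1 - k) ∧
      ∀ Q ⊂ ((Finset.range (2 ^ n)).filter fun k => bdom k j).image
          (fun k => 2 ^ n - 1 - k), j ∉ Up n Q :=
  complement_dominated_set_minimal_pattern_general n j hj
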